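/- arXiv:2403.07886 — 2 statements merged into one kernel-verified Lean document; each statement's English description precedes it below -/
import Mathlib

section
/- Let G = (V, E) be a finite simple undirected graph with |V| ≥ 3. If for every pair of distinct non-adjacent vertices a and b of G one has degree(a) + degree(b) ≥ |V|, then G contains a Hamiltonian cycle (a cycle visiting every vertex of G exactly once). -/
/-!
Induction downward from the complete graph, which is Hamiltonian as soon as `3 ≤ |V|`. If `u, v`
are non-adjacent with `deg u + deg v ≥ |V|` and `G + uv` has a Hamiltonian cycle, either that
cycle avoids `uv`, or removing `uv` leaves a Hamiltonian path `u = x₀, …, xₙ₋₁ = v` in `G`.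
Among its `n - 1` edges `xᵢxᵢ₊₁`, those with `u ~ xᵢ₊₁` and those with `v ~ xᵢ` number
`deg u` and `deg v`, so some edge is of both kinds, and
`u, xᵢ₊₁, …, v, xᵢ, …, x₁, u` is a Hamiltonian cycle of `G`.
-/

open Finset

namespace SimpleGraph

variable {V : Type*} {G H : SimpleGraph V}

namespace Walk

variable {u v x : V}

lemma append_toWalk_append {a b y : V} (q : G.Walk x a) (h : G.Adj a b) (r : G.Walk b y) :
    (q.append h.toWalk).append r = q.append (cons h r) := by
  rw [Adj.toWalk, ← append_assoc, cons_append, nil_append]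

lemma exists_mem_darts_snd_eq {w : V} {p : G.Walk u v} (hw : w ∈ p.support) (hne : w ≠ u) :
    ∃ d ∈ p.darts, d.snd = w := by
  rw [← List.mem_map, map_snd_darts]
  exact (p.mem_support_iff.mp hw).resolve_left hne

lemma exists_mem_darts_fst_eq {w : V} {p : G.Walk u v} (hw : w ∈ p.support) (hne : w ≠ v) :
    ∃ d ∈ p.darts, d.fst = w := by
  rw [← map_fst_darts_append, List.mem_append, List.mem_singleton] at hw
  exact List.mem_map.mp (hw.resolve_right hne)

variable [DecidableEq V]

lemma IsHamiltonian.reverse {p : G.Walk u v} (hp : p.IsHamiltonian) : p.reverse.IsHamiltonian := by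
  simpa [IsHamiltonian] using hp

lemma IsHamiltonian.transfer {p : G.Walk u v} (hp : p.IsHamiltonian)
    (hH : ∀ e ∈ p.edges, e ∈ H.edgeSet) : (p.transfer H hH).IsHamiltonian := by
  simpa [IsHamiltonian] using hp

lemma IsHamiltonianCycle.transfer {c : G.Walk u u} (hc : c.IsHamiltonianCycle)
    (hH : ∀ e ∈ c.edges, e ∈ H.edgeSet) : (c.transfer H hH).IsHamiltonianCycle :=
  isHamiltonianCycle_iff_isCycle_and_support_count_tail_eq_one.mpr
    ⟨hc.isCycle.transfer hH, by simpa using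
      (isHamiltonianCycle_iff_isCycle_and_support_count_tail_eq_one.mp hc).2⟩

lemma IsHamiltonianCycle.isHamiltonian_append_of_append_cons {a b : V} {q : G.Walk x a}
    {r : G.Walk b x} {h : G.Adj a b} (hc : (q.append (cons h r)).IsHamiltonianCycle) :
    (r.append q).IsHamiltonian := by
  intro z
  have hz := (isHamiltonianCycle_iff_isCycle_and_support_count_tail_eq_one.mp hc).2 z
  rw [support_append, support_cons, List.tail_cons,
    List.tail_append_of_ne_nil q.support_ne_nil, List.count_append] at hz
  rwa [support_append, List.count_append, add_comm]

lemma IsHamiltonianCycle.exists_isHamiltonian_of_mem_edges {c : G.Walk x x}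
    (hc : c.IsHamiltonianCycle) (he : s(u, v) ∈ c.edges) : ∃ p : G.Walk u v, p.IsHamiltonian := by
  have huv := c.adj_of_mem_edges he
  rcases (isSubwalk_toWalk_iff_mem_edges huv).mpr he with ⟨q, r, rfl⟩ | ⟨q, r, rfl⟩
  · rw [append_toWalk_append] at hc
    exact ⟨_, hc.isHamiltonian_append_of_append_cons.reverse⟩
  · rw [append_toWalk_append] at hc
    exact ⟨_, hc.isHamiltonian_append_of_append_cons⟩

variable [Fintype V]

lemma IsHamiltonian.notMem_edges {p : G.Walk u v} (hp : p.IsHamiltonian)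
    (hV : 3 ≤ Fintype.card V) : s(u, v) ∉ p.edges := fun he => by
  have := hp.isPath.length_eq_one_of_mem_edges he
  rw [hp.length_eq] at this
  omega

lemma IsHamiltonian.isHamiltonianCycle_cons {p : G.Walk v u} (hp : p.IsHamiltonian)
    (h : G.Adj u v) (hV : 3 ≤ Fintype.card V) : (cons h p).IsHamiltonianCycle :=
  isHamiltonianCycle_iff_isCycle_and_support_count_tail_eq_one.mpr
    ⟨(cons_isCycle_iff p h).mpr ⟨hp.isPath, Sym2.eq_swap ▸ hp.notMem_edges hV⟩,
      fun z => by simpa using hp z⟩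

variable [DecidableRel G.Adj]

lemma IsHamiltonian.exists_mem_darts_adj_snd_adj_fst {p : G.Walk u v} (hp : p.IsHamiltonian)
    (hdeg : Fintype.card V ≤ G.degree u + G.degree v) :
    ∃ d ∈ p.darts, G.Adj u d.snd ∧ G.Adj v d.fst := by
  set s := p.darts.toFinset
  have hcard : #s < #{d ∈ s | G.Adj u d.snd} + #{d ∈ s | G.Adj v d.fst} := calc
    #s ≤ p.length := (List.toFinset_card_le _).trans (length_darts p).le
    _ = Fintype.card V - 1 := hp.length_eq
    _ < Fintype.card V := Nat.sub_lt (Fintype.card_pos_iff.mpr ⟨u⟩) one_pos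
    _ ≤ G.degree u + G.degree v := hdeg
    _ ≤ _ := by
      rw [← card_neighborFinset_eq_degree, ← card_neighborFinset_eq_degree]
      refine add_le_add (card_le_card_of_surjOn (fun d : G.Dart => d.snd) fun w hw => ?_)
        (card_le_card_of_surjOn (fun d : G.Dart => d.fst) fun w hw => ?_)
      · have hw : G.Adj u w := by simpa using hw
        obtain ⟨d, hd, rfl⟩ := exists_mem_darts_snd_eq (hp.mem_support w) hw.ne'
        exact ⟨d, by simpa [s] using ⟨hd, hw⟩, rfl⟩
      · have hw : G.Adj v w := by simpa using hw
        obtain ⟨d, hd, rfl⟩ := exists_mem_darts_fst_eq (hp.mem_support w) hw.ne'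
        exact ⟨d, by simpa [s] using ⟨hd, hw⟩, rfl⟩
  obtain ⟨d, hd⟩ := inter_nonempty_of_card_lt_card_add_card (filter_subset _ _)
    (filter_subset _ _) hcard
  simp only [mem_inter, mem_filter, s, List.mem_toFinset] at hd
  exact ⟨d, hd.1.1, hd.1.2, hd.2.2⟩

theorem IsHamiltonian.isHamiltonian_of_card_le_degree_add_degree {p : G.Walk u v}
    (hp : p.IsHamiltonian) (hV : 3 ≤ Fintype.card V)
    (hdeg : Fintype.card V ≤ G.degree u + G.degree v) : G.IsHamiltonian := by
  obtain ⟨⟨⟨x, y⟩, hxy⟩, hd, huy, hvx⟩ := hp.exists_mem_darts_adj_snd_adj_fst hdeg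
  obtain ⟨q, r, rfl⟩ := (isSubwalk_toWalk_iff_mem_darts p hxy).mpr hd
  rw [append_toWalk_append] at hp
  -- `p` runs `u ⋯ x → y ⋯ v`; the cycle is `u → y ⋯ v → x ⋯ u`.
  have hw : (r.append (cons hvx q.reverse)).IsHamiltonian := fun z => by
    have := hp z
    simp only [support_append, support_cons, List.tail_cons, support_reverse,
      List.count_append, List.count_reverse] at this ⊢
    omega
  exact fun _ => ⟨u, cons huy _, hw.isHamiltonianCycle_cons huy hV⟩

end Walk

variable [DecidableEq V] [Fintype V]

lemma isHamiltonian_top (hV : 3 ≤ Fintype.card V) : (⊤ : SimpleGraph V).IsHamiltonian := by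
  obtain ⟨n, hn⟩ := Nat.exists_eq_add_of_le' hV
  let e : Fin (n + 3) ≃ V := (Fintype.equivFinOfCardEq hn).symm
  let f : cycleGraph (n + 3) →g ⊤ := ⟨e, fun h => e.injective.ne h.ne⟩
  have hc : (cycleGraph.cycle n).IsHamiltonianCycle :=
    Walk.isHamiltonianCycle_iff_isCycle_and_length_eq.mpr
      ⟨cycleGraph.isCycle_cycle, by simp [cycleGraph.length_cycle]⟩
  exact fun _ => ⟨_, _, hc.map (f := f) e.bijective⟩

theorem IsHamiltonian.of_sup_edge [DecidableRel G.Adj] {u v : V} (hV : 3 ≤ Fintype.card V)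
    (hdeg : Fintype.card V ≤ G.degree u + G.degree v) (h : (G ⊔ edge u v).IsHamiltonian) :
    G.IsHamiltonian := by
  have hG : ∀ e ∈ (G ⊔ edge u v).edgeSet, e ≠ s(u, v) → e ∈ G.edgeSet := by
    intro e he hne
    simp only [edgeSet_sup, edgeSet_edge, Set.mem_union, Set.mem_sdiff] at he
    exact he.resolve_right fun h => hne h.1
  intro hV1
  obtain ⟨x, c, hc⟩ := h hV1
  by_cases he : s(u, v) ∈ c.edges
  · obtain ⟨p, hp⟩ := hc.exists_isHamiltonian_of_mem_edges he
    have hG' : ∀ e ∈ p.edges, e ∈ G.edgeSet := fun e he' =>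
      hG e (p.edges_subset_edgeSet he') (ne_of_mem_of_not_mem he' (hp.notMem_edges hV))
    exact (hp.transfer hG').isHamiltonian_of_card_le_degree_add_degree hV hdeg hV1
  · exact ⟨x, _, hc.transfer fun e he' =>
      hG e (c.edges_subset_edgeSet he') (ne_of_mem_of_not_mem he' he)⟩

end SimpleGraph

open SimpleGraph

/-- **Ore's theorem**: if `G` is a finite simple graph on at least 3 vertices in which
every pair of distinct non-adjacent vertices `a`, `b` satisfies
`degree a + degree b ≥ |V|`, then `G` has a Hamiltonian cycle. -/
theorem ore_theorem {V : Type*} [Fintype V] [DecidableEq V]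
    (G : SimpleGraph V) [DecidableRel G.Adj]
    (hcard : 3 ≤ Fintype.card V)
    (hdeg : ∀ a b : V, a ≠ b → ¬ G.Adj a b →
      Fintype.card V ≤ G.degree a + G.degree b) :
    G.IsHamiltonian := by
  revert ‹DecidableRel G.Adj›
  induction G using WellFoundedGT.induction with
  | _ G ih =>
    intro _ hdeg
    by_cases hG : G = ⊤
    · subst hG
      exact isHamiltonian_top hcard
    obtain ⟨u, v, huv, hnadj⟩ : ∃ u v, u ≠ v ∧ ¬ G.Adj u v := by
      contrapose! hG
      ext u v
      exact ⟨fun h => h.ne, fun h => hG u v h⟩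
    refine (ih _ (lt_sup_edge _ _ _ huv hnadj) fun a b hab hnab => ?_).of_sup_edge hcard
      (hdeg u v huv hnadj)
    exact (hdeg a b hab fun h => hnab (le_sup_left (b := edge u v) h)).trans
      (add_le_add (degree_le_of_le le_sup_left) (degree_le_of_le le_sup_left))
end

section
/- Let G = (V, E) be a finite simple undirected graph with |V| ≥ 3. If every vertex v of G has degree at least |V|/2, then G contains a Hamiltonian cycle (a cycle visiting every vertex of G exactly once). -/
/-!
Take a longest path `a = v₀, …, vₘ = b`. By maximality every neighbour of `a` and of `b` lies on
the path, and since `deg a + deg b ≥ n > m`, pigeonhole gives an `i` with `a ~ vᵢ₊₁` and `b ~ vᵢ`.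
Then `v₀ … vᵢ vₘ vₘ₋₁ … vᵢ₊₁ v₀` is a cycle through exactly the vertices of the path. The degree
condition also makes `G` connected, so a vertex off this cycle would be joined to some cycle vertex
`y`; opening the cycle at `y` and prepending that vertex gives a path longer than the longest one.
Hence the cycle is Hamiltonian.
-/

open Finset

namespace List

variable {α : Type*} {R : α → α → Prop}

theorem IsChain.take_append_reverse_drop [Std.Symm R] {l : List α} (hl : l.IsChain R)
    {i : ℕ} (hi : i + 1 < l.length) (hlast : R l[i] (l.getLast (ne_nil_of_length_pos (by omega)))) :
    (l.take (i + 1) ++ (l.drop (i + 1)).reverse).IsChain R := by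
  rw [isChain_append, isChain_reverse]
  refine ⟨hl.take _, (hl.drop _).imp fun _ _ h => Std.Symm.symm _ _ h, fun x hx y hy => ?_⟩
  rw [getLast?_take, getElem?_eq_getElem (by omega)] at hx
  have hy' : y = l.getLast (ne_nil_of_length_pos (by omega)) := by
    simpa [getLast?_drop, show ¬l.length ≤ i + 1 by omega, getLast?_eq_some_getLast] using hy.symm
  have hx' : x = l[i] := by simpa using hx.symm
  subst hx' hy'
  exact hlast

end List

namespace SimpleGraph

variable {V : Type*} {G : SimpleGraph V}

namespace Walk

theorem exists_isCycle_of_isChain {l : List V} (hne : l ≠ []) (hl : l.IsChain G.Adj)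
    (hnodup : l.Nodup) (hlen : 3 ≤ l.length) (hclose : G.Adj (l.getLast hne) (l.head hne)) :
    ∃ x, ∃ c : G.Walk x x, c.IsCycle ∧ c.support.tail = l := by
  set q := ofSupport l hne hl
  have hq : q.IsPath := by rw [isPath_def, support_ofSupport]; exact hnodup
  refine ⟨_, cons hclose q, (cons_isCycle_iff q hclose).mpr ⟨hq, fun he => ?_⟩,
    support_ofSupport ..⟩
  have := hq.length_eq_one_of_mem_edges (Sym2.eq_swap ▸ he)
  simp only [q, length_ofSupport] at this
  omega

theorem IsPath.exists_isCycle_perm_support {a b : V} {p : G.Walk a b} (hp : p.IsPath)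
    (hlen : 2 ≤ p.length) {i : ℕ} (hi : i < p.length) (ha : G.Adj a (p.getVert (i + 1)))
    (hb : G.Adj b (p.getVert i)) :
    ∃ x, ∃ c : G.Walk x x, c.IsCycle ∧ c.support.tail.Perm p.support := by
  have hil : i + 1 < p.support.length := by rw [length_support]; omega
  set L := p.support.take (i + 1) ++ (p.support.drop (i + 1)).reverse
  have hperm : L.Perm p.support :=
    ((List.reverse_perm _).append_left _).trans (by rw [List.take_append_drop])
  have hne : L ≠ [] := by rw [← List.length_pos_iff, hperm.length_eq]; omega
  have hhead : L.head hne = a := by simp [L, List.head_take]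
  have hlast : L.getLast hne = p.getVert (i + 1) := by
    rw [List.getLast_append_of_ne_nil _ (by simpa using hil), List.getLast_reverse,
      List.head_drop, getVert_eq_support_getElem _ hi]
  have hchain : L.IsChain G.Adj := by
    have := G.symm
    refine p.isChain_adj_support.take_append_reverse_drop hil ?_
    simpa [← getVert_eq_support_getElem _ hi.le] using hb.symm
  obtain ⟨x, c, hc, hsupp⟩ := exists_isCycle_of_isChain hne hchain
    (hperm.nodup_iff.mpr hp.support_nodup) (by rw [hperm.length_eq, length_support]; omega)
    (by rw [hhead, hlast]; exact ha.symm)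
  exact ⟨x, c, hc, hsupp ▸ hperm⟩

theorem exists_adj_getVert_succ_of_forall_adj_mem_support {a b : V} (p : G.Walk a b)
    [Fintype (G.neighborSet a)] [Fintype (G.neighborSet b)]
    (ha : ∀ w, G.Adj a w → w ∈ p.support) (hb : ∀ w, G.Adj b w → w ∈ p.support)
    (hdeg : p.length < G.degree a + G.degree b) :
    ∃ i < p.length, G.Adj a (p.getVert (i + 1)) ∧ G.Adj b (p.getVert i) := by
  classical
  set S := (range p.length).filter fun i => G.Adj a (p.getVert (i + 1))
  set T := (range p.length).filter fun i => G.Adj b (p.getVert i)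
  have hS : G.degree a ≤ #S := by
    rw [← card_neighborFinset_eq_degree]
    refine card_le_card_of_surjOn (fun i => p.getVert (i + 1)) fun w hw => ?_
    rw [mem_coe, mem_neighborFinset] at hw
    obtain ⟨j, rfl, hj⟩ := mem_support_iff_exists_getVert.mp (ha w hw)
    have hj0 : j ≠ 0 := by rintro rfl; simp at hw
    have hj : j - 1 + 1 = j := by omega
    exact ⟨j - 1, by simpa [S, hj] using ⟨by omega, hw⟩, by simp only [hj]⟩
  have hT : G.degree b ≤ #T := by
    rw [← card_neighborFinset_eq_degree]
    refine card_le_card_of_surjOn p.getVert fun w hw => ?_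
    rw [mem_coe, mem_neighborFinset] at hw
    obtain ⟨j, rfl, hj⟩ := mem_support_iff_exists_getVert.mp (hb w hw)
    have hjl : j ≠ p.length := by rintro rfl; simp at hw
    exact ⟨j, by simpa [T] using ⟨by omega, hw⟩, rfl⟩
  obtain ⟨i, hi⟩ := inter_nonempty_of_card_lt_card_add_card (s := range p.length) (t := S)
    (u := T) (filter_subset _ _) (filter_subset _ _) (by rw [card_range]; omega)
  simp only [S, T, mem_inter, mem_filter, mem_range] at hi
  exact ⟨i, hi.1.1, hi.1.2, hi.2.2⟩

theorem degree_le_length_of_forall_adj_mem_support {a b : V} (p : G.Walk a b)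
    [Fintype (G.neighborSet a)] (ha : ∀ w, G.Adj a w → w ∈ p.support) :
    G.degree a ≤ p.length := by
  classical
  have hsub : insert a (G.neighborFinset a) ⊆ p.support.toFinset := by
    intro w hw
    rw [mem_insert, mem_neighborFinset] at hw
    rw [List.mem_toFinset]
    rcases hw with rfl | hw
    · exact p.start_mem_support
    · exact ha w hw
  have := (card_le_card hsub).trans (List.toFinset_card_le _)
  rw [card_insert_of_notMem (by simp), card_neighborFinset_eq_degree, length_support] at this
  omega

theorem IsCycle.exists_isPath_length_eq [DecidableEq V] {x y w : V} {c : G.Walk x x}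
    (hc : c.IsCycle) (hy : y ∈ c.support) (hw : w ∉ c.support) (h : G.Adj w y) :
    ∃ z, ∃ q : G.Walk w z, q.IsPath ∧ q.length = c.length := by
  have hc' : (c.rotate y hy).IsCycle := hc.rotate hy
  have hw' : w ∉ (c.rotate y hy).tail.support := by
    rw [support_tail_of_not_nil _ hc'.not_nil, (support_rotate c y hy).mem_iff]
    exact fun hmem => hw (List.mem_of_mem_tail hmem)
  refine ⟨_, cons h (c.rotate y hy).tail.reverse, ?_, ?_⟩
  · rw [cons_isPath_iff, support_reverse, List.mem_reverse]
    exact ⟨hc'.isPath_tail.reverse, hw'⟩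
  · rw [length_cons, length_reverse, length_tail_add_one hc'.not_nil, length_rotate]

theorem IsCycle.isHamiltonianCycle_of_perm [DecidableEq V] {x a b : V} {c : G.Walk x x}
    {p : G.Walk a b} (hc : c.IsCycle) (hperm : c.support.tail.Perm p.support)
    (hp : p.IsHamiltonian) : c.IsHamiltonianCycle :=
  isHamiltonianCycle_iff_isCycle_and_support_count_tail_eq_one.mpr
    ⟨hc, fun v => hperm.count_eq v ▸ hp v⟩

structure IsLongestPath {a b : V} (p : G.Walk a b) : Prop where
  isPath : p.IsPath
  length_le : ∀ ⦃x y : V⦄ (q : G.Walk x y), q.IsPath → q.length ≤ p.length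

theorem IsLongestPath.reverse {a b : V} {p : G.Walk a b} (hp : p.IsLongestPath) :
    p.reverse.IsLongestPath :=
  ⟨hp.isPath.reverse, fun _ _ q hq => (length_reverse p).symm ▸ hp.length_le q hq⟩

theorem IsLongestPath.mem_support_of_adj_start {a b w : V} {p : G.Walk a b}
    (hp : p.IsLongestPath) (h : G.Adj a w) : w ∈ p.support := by
  by_contra hw
  have := hp.length_le (cons h.symm p) (hp.isPath.cons hw)
  rw [length_cons] at this
  omega

theorem IsLongestPath.mem_support_of_adj_end {a b w : V} {p : G.Walk a b}
    (hp : p.IsLongestPath) (h : G.Adj b w) : w ∈ p.support := by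
  simpa using hp.reverse.mem_support_of_adj_start h

theorem IsLongestPath.mem_support_of_isCycle [DecidableEq V] {a b : V} {p : G.Walk a b}
    (hp : p.IsLongestPath) (hG : G.Preconnected) {x : V} {c : G.Walk x x} (hc : c.IsCycle)
    (hperm : c.support.tail.Perm p.support) (v : V) : v ∈ p.support := by
  have hmem : ∀ w, w ∈ c.support ↔ w ∈ p.support := fun w => by
    rw [← hperm.mem_iff, mem_support_iff, or_iff_right_of_imp]
    rintro rfl
    exact end_mem_tail_support hc.not_nil
  by_contra hv
  obtain ⟨d, -, hd, hd'⟩ :=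
    (hG a v).some.exists_boundary_dart {w | w ∈ p.support} p.start_mem_support hv
  obtain ⟨z, q, hq, hlen⟩ :=
    hc.exists_isPath_length_eq ((hmem _).mpr hd) (mt (hmem _).mp hd') d.adj.symm
  have hclen : c.length = p.length + 1 := by
    rw [← length_support, ← hperm.length_eq, ← length_tail_add_one hc.not_nil,
      ← support_tail_of_not_nil _ hc.not_nil, length_support]
  have := hp.length_le q hq
  omega

end Walk

theorem exists_isLongestPath [Finite V] [Nonempty V] (G : SimpleGraph V) :
    ∃ a b, ∃ p : G.Walk a b, p.IsLongestPath := by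
  have := Fintype.ofFinite V
  obtain ⟨v⟩ := ‹Nonempty V›
  set S := {k | ∃ a b, ∃ p : G.Walk a b, p.IsPath ∧ p.length = k}
  have hbdd : BddAbove S := ⟨Fintype.card V, by rintro _ ⟨_, _, p, hp, rfl⟩; exact hp.length_lt.le⟩
  obtain ⟨a, b, p, hp, hlen⟩ := Nat.sSup_mem (s := S) ⟨0, v, v, .nil, by simp⟩ hbdd
  exact ⟨a, b, p, hp, fun x y q hq => hlen ▸ le_csSup hbdd ⟨x, y, q, hq, rfl⟩⟩

theorem preconnected_of_card_le_degree_add_degree [Fintype V] [DecidableRel G.Adj]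
    (h : ∀ u v, u ≠ v → ¬G.Adj u v → Fintype.card V ≤ G.degree u + G.degree v + 1) :
    G.Preconnected := by
  classical
  intro u v
  by_cases huv : u = v
  · exact huv ▸ .refl u
  by_cases hadj : G.Adj u v
  · exact hadj.reachable
  have hsub : ∀ {x y}, x ≠ y → ¬G.Adj x y → G.neighborFinset x ⊆ {x, y}ᶜ := by
    intro x y hxy hadj w hw
    rw [mem_neighborFinset] at hw
    simp only [mem_compl, mem_insert, mem_singleton, not_or]
    exact ⟨(G.ne_of_adj hw).symm, fun h => hadj (h ▸ hw)⟩
  obtain ⟨w, hw⟩ := inter_nonempty_of_card_lt_card_add_card (hsub huv hadj)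
    (pair_comm u v ▸ hsub (Ne.symm huv) (fun h => hadj h.symm)) (by
      rw [card_compl, card_pair huv, card_neighborFinset_eq_degree, card_neighborFinset_eq_degree]
      have := h u v huv hadj
      have := Fintype.one_lt_card_iff.mpr ⟨u, v, huv⟩
      omega)
  rw [mem_inter, mem_neighborFinset, mem_neighborFinset] at hw
  exact hw.1.reachable.trans hw.2.symm.reachable

end SimpleGraph

/-- **Dirac's theorem**: if `G` is a finite simple graph on at least 3 vertices in which
every vertex has degree at least `|V| / 2`, then `G` has a Hamiltonian cycle. -/
theorem dirac_theorem {V : Type*} [Fintype V] [DecidableEq V]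
    (G : SimpleGraph V) [DecidableRel G.Adj]
    (hcard : 3 ≤ Fintype.card V)
    (hdeg : ∀ v : V, (Fintype.card V : ℝ) / 2 ≤ (G.degree v : ℝ)) :
    G.IsHamiltonian := by
  have hdeg' (v : V) : Fintype.card V ≤ 2 * G.degree v := by
    have := hdeg v
    exact_mod_cast (by linarith : (Fintype.card V : ℝ) ≤ 2 * G.degree v)
  have : Nonempty V := Fintype.card_pos_iff.mp (by omega)
  obtain ⟨a, b, p, hp⟩ := G.exists_isLongestPath
  have ha (w : V) : G.Adj a w → w ∈ p.support := hp.mem_support_of_adj_start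
  have hb (w : V) : G.Adj b w → w ∈ p.support := hp.mem_support_of_adj_end
  have hlen : 2 ≤ p.length := by
    have := p.degree_le_length_of_forall_adj_mem_support ha
    have := hdeg' a
    omega
  obtain ⟨i, hi, hai, hbi⟩ := p.exists_adj_getVert_succ_of_forall_adj_mem_support ha hb (by
    have := hp.isPath.length_lt
    have := hdeg' a
    have := hdeg' b
    omega)
  obtain ⟨x, c, hc, hperm⟩ := hp.isPath.exists_isCycle_perm_support hlen hi hai hbi
  have hG : G.Preconnected := SimpleGraph.preconnected_of_card_le_degree_add_degree
    fun u v _ _ => by have := hdeg' u; have := hdeg' v; omega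
  exact fun _ => ⟨x, c, hc.isHamiltonianCycle_of_perm hperm
    (hp.isPath.isHamiltonian_of_mem (hp.mem_support_of_isCycle hG hc hperm))⟩
end
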